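/- arXiv:2605.18875 — 3 statements merged into one kernel-verified Lean document; each statement's English description precedes it below -/
import Mathlib

section
/- Let d ≥ 2 and f : F₂^d → F₂ be a local rule. Define the no-boundary CA map F : F₂^{2(d-1)} → F₂^{d-1} by F(x)_i = f(x_i, ..., x_{i+d-1}) for 1 ≤ i ≤ d-1. Then the square S_F of order N = 2^{d-1} defined by S_F(i,j) = F(ψ(i) ++ ψ(j)) (identifying [N] with F₂^{d-1} via a fixed bijection ψ) is a Latin square if and only if f is bipermutive, i.e., there exists g : F₂^{d-2} → F₂ with f(x₁,...,x_d) = x₁ ⊕ g(x₂,...,x_{d-1}) ⊕ x_d. -/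
/-- No-boundary CA of diameter `d` on `2(d-1)` cells. -/
def nbca (d : ℕ) (hd : 2 ≤ d) (f : (Fin d → ZMod 2) → ZMod 2)
    (x : Fin ((d-1)+(d-1)) → ZMod 2) : Fin (d-1) → ZMod 2 :=
  fun i => f fun k => x ⟨i.val + k.val, by have := i.isLt; have := k.isLt; omega⟩

/-- A local rule is bipermutive if it is the XOR of the first variable, the last
variable, and a generating function of the middle `d-2` variables. -/
def Bipermutive (d : ℕ) (hd : 2 ≤ d) (f : (Fin d → ZMod 2) → ZMod 2) : Prop :=
  ∃ g : (Fin (d-2) → ZMod 2) → ZMod 2, ∀ x,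
    f x = x ⟨0, by omega⟩ + g (fun k => x ⟨k.val + 1, by have := k.isLt; omega⟩)
        + x ⟨d-1, by omega⟩


lemma append_apply {m : ℕ} (x y : Fin m → ZMod 2) (c : Fin (m+m)) :
    Fin.append x y c = if h : c.val < m then x ⟨c.val, h⟩ else y ⟨c.val - m, by have := c.isLt; omega⟩ := by
  rcases Nat.lt_or_ge c.val m with h | h
  · rw [dif_pos h]
    have hc : c = Fin.castAdd m ⟨c.val, h⟩ := by ext; simp
    conv_lhs => rw [hc, Fin.append_left]
  · rw [dif_neg (by omega)]
    have hc : c = Fin.natAdd m ⟨c.val - m, by have := c.isLt; omega⟩ := by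
      ext; simp; omega
    conv_lhs => rw [hc, Fin.append_right]

lemma nbca_bip (d : ℕ) (hd : 2 ≤ d) (f : (Fin d → ZMod 2) → ZMod 2)
    (g : (Fin (d-2) → ZMod 2) → ZMod 2)
    (hg : ∀ x, f x = x ⟨0, by omega⟩ + g (fun k => x ⟨k.val + 1, by have := k.isLt; omega⟩)
        + x ⟨d-1, by omega⟩)
    (x : Fin ((d-1)+(d-1)) → ZMod 2) (i : Fin (d-1)) :
    nbca d hd f x i = x ⟨i.val, by have := i.isLt; omega⟩
      + g (fun k => x ⟨i.val + k.val + 1, by have := i.isLt; have := k.isLt; omega⟩)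
      + x ⟨i.val + (d-1), by have := i.isLt; omega⟩ := by
  exact hg _

set_option maxHeartbeats 1000000 in
lemma row_inj (d : ℕ) (hd : 2 ≤ d) (f : (Fin d → ZMod 2) → ZMod 2)
    (g : (Fin (d-2) → ZMod 2) → ZMod 2)
    (hg : ∀ x, f x = x ⟨0, by omega⟩ + g (fun k => x ⟨k.val + 1, by have := k.isLt; omega⟩)
        + x ⟨d-1, by omega⟩)
    (x y y' : Fin (d-1) → ZMod 2)
    (h : nbca d hd f (Fin.append x y) = nbca d hd f (Fin.append x y')) : y = y' := by
  have key : ∀ n, ∀ t : Fin (d-1), t.val = n → y t = y' t := by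
    intro n
    induction n using Nat.strong_induction_on with
    | _ n IH =>
      intro t ht
      have h1 := congrFun h t
      rw [nbca_bip d hd f g hg, nbca_bip d hd f g hg] at h1
      simp only [append_apply] at h1
      rw [dif_pos (by have := t.isLt; omega : t.val < d-1)] at h1
      rw [dif_pos (by have := t.isLt; omega : t.val < d-1)] at h1
      rw [dif_neg (by omega : ¬ (t.val + (d-1) < d-1))] at h1
      rw [dif_neg (by omega : ¬ (t.val + (d-1) < d-1))] at h1
      have hG : (fun k : Fin (d-2) =>
          if h : t.val + k.val + 1 < d-1 then x ⟨t.val + k.val + 1, h⟩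
          else y ⟨t.val + k.val + 1 - (d-1), by have := t.isLt; have := k.isLt; omega⟩) =
          (fun k : Fin (d-2) =>
          if h : t.val + k.val + 1 < d-1 then x ⟨t.val + k.val + 1, h⟩
          else y' ⟨t.val + k.val + 1 - (d-1), by have := t.isLt; have := k.isLt; omega⟩) := by
        funext k
        split_ifs with hk
        · rfl
        · exact IH (t.val + k.val + 1 - (d-1)) (by have := k.isLt; omega) _ rfl
      rw [hG] at h1
      have h2 := add_left_cancel h1
      have he : (⟨t.val + (d-1) - (d-1), by have := t.isLt; omega⟩ : Fin (d-1)) = t := by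
        ext; show t.val + (d-1) - (d-1) = t.val; omega
      rwa [he] at h2
  funext t; exact key t.val t rfl

set_option maxHeartbeats 1000000 in
lemma col_inj (d : ℕ) (hd : 2 ≤ d) (f : (Fin d → ZMod 2) → ZMod 2)
    (g : (Fin (d-2) → ZMod 2) → ZMod 2)
    (hg : ∀ x, f x = x ⟨0, by omega⟩ + g (fun k => x ⟨k.val + 1, by have := k.isLt; omega⟩)
        + x ⟨d-1, by omega⟩)
    (x x' y : Fin (d-1) → ZMod 2)
    (h : nbca d hd f (Fin.append x y) = nbca d hd f (Fin.append x' y)) : x = x' := by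
  have key : ∀ n, ∀ t : Fin (d-1), (d-2) - t.val = n → x t = x' t := by
    intro n
    induction n using Nat.strong_induction_on with
    | _ n IH =>
      intro t ht
      have h1 := congrFun h t
      rw [nbca_bip d hd f g hg, nbca_bip d hd f g hg] at h1
      simp only [append_apply] at h1
      rw [dif_pos (by have := t.isLt; omega : t.val < d-1)] at h1
      rw [dif_pos (by have := t.isLt; omega : t.val < d-1)] at h1
      rw [dif_neg (by omega : ¬ (t.val + (d-1) < d-1))] at h1
      rw [dif_neg (by omega : ¬ (t.val + (d-1) < d-1))] at h1
      have hG : (fun k : Fin (d-2) =>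
          if h : t.val + k.val + 1 < d-1 then x ⟨t.val + k.val + 1, h⟩
          else y ⟨t.val + k.val + 1 - (d-1), by have := t.isLt; have := k.isLt; omega⟩) =
          (fun k : Fin (d-2) =>
          if h : t.val + k.val + 1 < d-1 then x' ⟨t.val + k.val + 1, h⟩
          else y ⟨t.val + k.val + 1 - (d-1), by have := t.isLt; have := k.isLt; omega⟩) := by
        funext k
        split_ifs with hk
        · exact IH ((d-2) - (t.val + k.val + 1)) (by have := k.isLt; omega) ⟨t.val + k.val + 1, hk⟩ rfl
        · rfl
      rw [hG] at h1
      have h2 := add_right_cancel h1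
      exact add_right_cancel h2
  funext t; exact key ((d-2) - t.val) t rfl

set_option maxHeartbeats 1000000 in
lemma perm_last (d : ℕ) (hd : 2 ≤ d) (f : (Fin d → ZMod 2) → ZMod 2)
    (hrow : ∀ x y y' : Fin (d-1) → ZMod 2,
      nbca d hd f (Fin.append x y) = nbca d hd f (Fin.append x y') → y = y')
    (u v : Fin d → ZMod 2) (huv : ∀ k : Fin d, k.val < d-1 → u k = v k) :
    f u + u ⟨d-1, by omega⟩ = f v + v ⟨d-1, by omega⟩ := by
  by_cases hul : u ⟨d-1, by omega⟩ = v ⟨d-1, by omega⟩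
  · have huv2 : u = v := by
      funext k
      rcases Nat.lt_or_ge k.val (d-1) with hk | hk
      · exact huv k hk
      · have hk2 : k = ⟨d-1, by omega⟩ := Fin.ext (by simp only [Fin.val_mk]; have := k.isLt; omega)
        rw [hk2]; exact hul
    rw [huv2]
  · have hfuv : f u ≠ f v := by
      intro heq
      apply hul
      have hne : nbca d hd f (Fin.append
            (fun j : Fin (d-1) => if j.val = d-2 then u ⟨0, by omega⟩ else 0)
            (fun j : Fin (d-1) => u ⟨j.val + 1, by have := j.isLt; omega⟩))
          = nbca d hd f (Fin.append
            (fun j : Fin (d-1) => if j.val = d-2 then u ⟨0, by omega⟩ else 0)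
            (fun j : Fin (d-1) => v ⟨j.val + 1, by have := j.isLt; omega⟩)) := by
        funext i
        show f _ = f _
        rcases Nat.lt_or_ge i.val (d-2) with hi | hi
        · congr 1
          funext k
          simp only [append_apply, Fin.val_mk]
          split_ifs with hc hc2
          · rfl
          · rfl
          · apply huv
            simp only [Fin.val_mk]
            have := i.isLt; have := k.isLt; omega
        · have hid : i.val = d-2 := by have := i.isLt; omega
          have hwu : (fun k : Fin d => Fin.append
              (fun j : Fin (d-1) => if j.val = d-2 then u ⟨0, by omega⟩ else 0)
              (fun j : Fin (d-1) => u ⟨j.val + 1, by have := j.isLt; omega⟩)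
              ⟨i.val + k.val, by have := i.isLt; have := k.isLt; omega⟩) = u := by
            funext k
            simp only [append_apply, Fin.val_mk]
            split_ifs with hc hc2
            · exact congrArg u (Fin.ext (by simp only [Fin.val_mk]; omega))
            · exact absurd (by omega : i.val + k.val = d-2) hc2
            · exact congrArg u (Fin.ext (by simp only [Fin.val_mk]; have := k.isLt; omega))
          have hwv : (fun k : Fin d => Fin.append
              (fun j : Fin (d-1) => if j.val = d-2 then u ⟨0, by omega⟩ else 0)
              (fun j : Fin (d-1) => v ⟨j.val + 1, by have := j.isLt; omega⟩)
              ⟨i.val + k.val, by have := i.isLt; have := k.isLt; omega⟩) = v := by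
            funext k
            simp only [append_apply, Fin.val_mk]
            split_ifs with hc hc2
            · exact (huv ⟨0, by omega⟩ (by simp only [Fin.val_mk]; omega)).trans
                (congrArg v (Fin.ext (by simp only [Fin.val_mk]; omega)))
            · exact absurd (by omega : i.val + k.val = d-2) hc2
            · exact congrArg v (Fin.ext (by simp only [Fin.val_mk]; have := k.isLt; omega))
          exact (congrArg f hwu).trans (heq.trans (congrArg f hwv).symm)
      have h2 : u ⟨d-2+1, by omega⟩ = v ⟨d-2+1, by omega⟩ :=
        congrFun (hrow _ _ _ hne) ⟨d-2, by omega⟩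
      have e : (⟨d-2+1, by omega⟩ : Fin d) = ⟨d-1, by omega⟩ :=
        Fin.ext (by simp only [Fin.val_mk]; omega)
      exact (congrArg u e).symm.trans (h2.trans (congrArg v e))
    revert hul hfuv
    generalize u ⟨d-1, by omega⟩ = a
    generalize v ⟨d-1, by omega⟩ = b
    generalize f u = c
    generalize f v = e
    revert a b c e
    decide

set_option maxHeartbeats 1000000 in
lemma perm_first (d : ℕ) (hd : 2 ≤ d) (f : (Fin d → ZMod 2) → ZMod 2)
    (hcol : ∀ x x' y : Fin (d-1) → ZMod 2,
      nbca d hd f (Fin.append x y) = nbca d hd f (Fin.append x' y) → x = x')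
    (u v : Fin d → ZMod 2) (huv : ∀ k : Fin d, 0 < k.val → u k = v k) :
    f u + u ⟨0, by omega⟩ = f v + v ⟨0, by omega⟩ := by
  by_cases hul : u ⟨0, by omega⟩ = v ⟨0, by omega⟩
  · have huv2 : u = v := by
      funext k
      rcases Nat.eq_zero_or_pos k.val with hk | hk
      · have hk2 : k = ⟨0, by omega⟩ := Fin.ext (by simp only [Fin.val_mk]; omega)
        rw [hk2]; exact hul
      · exact huv k hk
    rw [huv2]
  · have hfuv : f u ≠ f v := by
      intro heq
      apply hul
      have hne : nbca d hd f (Fin.append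
            (fun j : Fin (d-1) => u ⟨j.val, by have := j.isLt; omega⟩)
            (fun j : Fin (d-1) => if j.val = 0 then u ⟨d-1, by omega⟩ else 0))
          = nbca d hd f (Fin.append
            (fun j : Fin (d-1) => v ⟨j.val, by have := j.isLt; omega⟩)
            (fun j : Fin (d-1) => if j.val = 0 then u ⟨d-1, by omega⟩ else 0)) := by
        funext i
        show f _ = f _
        rcases Nat.eq_zero_or_pos i.val with hi | hi
        · have hwu : (fun k : Fin d => Fin.append
              (fun j : Fin (d-1) => u ⟨j.val, by have := j.isLt; omega⟩)
              (fun j : Fin (d-1) => if j.val = 0 then u ⟨d-1, by omega⟩ else 0)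
              ⟨i.val + k.val, by have := i.isLt; have := k.isLt; omega⟩) = u := by
            funext k
            simp only [append_apply, Fin.val_mk]
            split_ifs with hc hc2
            · exact congrArg u (Fin.ext (by simp only [Fin.val_mk]; omega))
            · exact congrArg u (Fin.ext (by simp only [Fin.val_mk]; have := k.isLt; omega))
            · exact absurd (by have := k.isLt; omega : i.val + k.val - (d-1) = 0) hc2
          have hwv : (fun k : Fin d => Fin.append
              (fun j : Fin (d-1) => v ⟨j.val, by have := j.isLt; omega⟩)
              (fun j : Fin (d-1) => if j.val = 0 then u ⟨d-1, by omega⟩ else 0)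
              ⟨i.val + k.val, by have := i.isLt; have := k.isLt; omega⟩) = v := by
            funext k
            simp only [append_apply, Fin.val_mk]
            split_ifs with hc hc2
            · exact congrArg v (Fin.ext (by simp only [Fin.val_mk]; omega))
            · exact (huv ⟨d-1, by omega⟩ (by simp only [Fin.val_mk]; omega)).trans
                (congrArg v (Fin.ext (by simp only [Fin.val_mk]; have := k.isLt; omega)))
            · exact absurd (by have := k.isLt; omega : i.val + k.val - (d-1) = 0) hc2
          exact (congrArg f hwu).trans (heq.trans (congrArg f hwv).symm)
        · congr 1
          funext k
          simp only [append_apply, Fin.val_mk]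
          split_ifs with hc hc2
          · apply huv
            simp only [Fin.val_mk]
            omega
          · rfl
          · rfl
      have h2 : u ⟨0, by omega⟩ = v ⟨0, by omega⟩ :=
        congrFun (hcol _ _ _ hne) ⟨0, by omega⟩
      exact h2
    revert hul hfuv
    generalize u ⟨0, by omega⟩ = a
    generalize v ⟨0, by omega⟩ = b
    generalize f u = c
    generalize f v = e
    revert a b c e
    decide

set_option maxHeartbeats 1000000 in
theorem stmt0 (d : ℕ) (hd : 2 ≤ d) (f : (Fin d → ZMod 2) → ZMod 2)
    (ψ : Fin (2^(d-1)) ≃ (Fin (d-1) → ZMod 2))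
    (S : Fin (2^(d-1)) → Fin (2^(d-1)) → Fin (2^(d-1)))
    (hS : ∀ i j, S i j = ψ.symm (nbca d hd f (Fin.append (ψ i) (ψ j)))) :
    ((∀ i, Function.Bijective (S i)) ∧ (∀ j, Function.Bijective fun i => S i j))
      ↔ Bipermutive d hd f := by
  constructor
  · rintro ⟨hrow, hcol⟩
    have hrow' : ∀ x y y' : Fin (d-1) → ZMod 2,
        nbca d hd f (Fin.append x y) = nbca d hd f (Fin.append x y') → y = y' := by
      intro x y y' h
      have h1 : S (ψ.symm x) (ψ.symm y) = S (ψ.symm x) (ψ.symm y') := by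
        rw [hS, hS]
        simp only [Equiv.apply_symm_apply]
        rw [h]
      have h2 := (hrow (ψ.symm x)).injective h1
      exact ψ.symm.injective h2
    have hcol' : ∀ x x' y : Fin (d-1) → ZMod 2,
        nbca d hd f (Fin.append x y) = nbca d hd f (Fin.append x' y) → x = x' := by
      intro x x' y h
      have h1 : S (ψ.symm x) (ψ.symm y) = S (ψ.symm x') (ψ.symm y) := by
        rw [hS, hS]
        simp only [Equiv.apply_symm_apply]
        rw [h]
      have h2 := (hcol (ψ.symm y)).injective h1
      exact ψ.symm.injective h2
    refine ⟨fun z => f (fun k => if h : 0 < k.val ∧ k.val < d-1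
      then z ⟨k.val - 1, by omega⟩ else 0), fun x => ?_⟩
    have e1 := perm_first d hd f hcol' x
      (fun k => if h : 0 < k.val then x k else 0)
      (fun k hk => by show x k = if h : 0 < k.val then x k else 0; rw [dif_pos hk])
    have e1' : f x + x ⟨0, by omega⟩ = f (fun k => if h : 0 < k.val then x k else 0) :=
      e1.trans (add_zero _)
    have e2 := perm_last d hd f hrow'
      (fun k => if h : 0 < k.val then x k else 0)
      (fun k => if h : k.val < d-1 then (if h2 : 0 < k.val then x k else 0) else 0)
      (fun k hk => by
        show (if h : 0 < k.val then x k else 0)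
          = if h : k.val < d-1 then (if h2 : 0 < k.val then x k else 0) else 0
        rw [dif_pos hk])
    simp only [Fin.val_mk] at e2
    rw [dif_neg (by omega : ¬ (d-1 < d-1))] at e2
    rw [dif_pos (by omega : 0 < d-1)] at e2
    have e2' : f (fun k => if h : 0 < k.val then x k else 0) + x ⟨d-1, by omega⟩
        = f (fun k => if h : k.val < d-1 then (if h2 : 0 < k.val then x k else 0) else 0) :=
      e2.trans (add_zero _)
    have hgm : f (fun k : Fin d => if h : 0 < k.val ∧ k.val < d-1
          then x ⟨k.val - 1 + 1, by omega⟩ else 0)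
        = f (fun k => if h : k.val < d-1 then (if h2 : 0 < k.val then x k else 0) else 0) := by
      congr 1
      funext k
      by_cases h1 : 0 < k.val ∧ k.val < d-1
      · rw [dif_pos h1, dif_pos h1.2, dif_pos h1.1]
        exact congrArg x (Fin.ext (by simp only [Fin.val_mk]; omega))
      · rw [dif_neg h1]
        by_cases h2 : k.val < d-1
        · rw [dif_pos h2, dif_neg (by omega : ¬ 0 < k.val)]
        · rw [dif_neg h2]
    have hself : ∀ a : ZMod 2, a + a = 0 := by decide
    have A : f x = f (fun k => if h : 0 < k.val then x k else 0) + x ⟨0, by omega⟩ := by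
      rw [← e1', add_assoc, hself, add_zero]
    have B : f (fun k => if h : 0 < k.val then x k else 0)
        = f (fun k => if h : k.val < d-1 then (if h2 : 0 < k.val then x k else 0) else 0)
          + x ⟨d-1, by omega⟩ := by
      rw [← e2', add_assoc, hself, add_zero]
    have key : f x = x ⟨0, by omega⟩
        + f (fun k : Fin d => if h : 0 < k.val ∧ k.val < d-1
            then x ⟨k.val - 1 + 1, by omega⟩ else 0)
        + x ⟨d-1, by omega⟩ := by
      rw [A, B, hgm]; ring
    exact key
  · rintro ⟨g, hg⟩
    constructor
    · intro i
      rw [← Finite.injective_iff_bijective]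
      intro j j' h
      rw [hS, hS] at h
      have h2 := ψ.symm.injective h
      have h3 := row_inj d hd f g hg (ψ i) (ψ j) (ψ j') h2
      exact ψ.injective h3
    · intro j
      rw [← Finite.injective_iff_bijective]
      intro i i' h
      simp only at h
      rw [hS, hS] at h
      have h2 := ψ.symm.injective h
      have h3 := col_inj d hd f g hg (ψ i) (ψ i') (ψ j) h2
      exact ψ.injective h3
end

section
/- The periodic-boundary CA on n cells with local rule χ(x₁,x₂,x₃) = x₁ ⊕ x₂ ⊕ x₂x₃ (over F₂), i.e., the map F : F₂^n → F₂^n given by F(x)_i = x_i ⊕ x_{i+1} ⊕ x_{i+1}x_{i+2} with indices mod n, is a bijection whenever n is odd. -/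
private lemma microA : ∀ a a' b c : ZMod 2, a + b + b*c = a' + b + b*c → a = a' := by decide

private lemma microB : ∀ a b c d a' b' c' d' : ZMod 2,
    (a + b + b*c = a' + b' + b'*c' ∧
     b + c + c*d = b' + c' + c'*d' ∧
     b ≠ b' ∧ c = c' ∧ d ≠ d') → a = a' := by decide

private lemma microC : ∀ a b c a' b' c' : ZMod 2,
    a+b+b*c = a'+b'+b'*c' → a ≠ a' → b ≠ b' → c ≠ c' → b ≠ c := by decide

private lemma microD : ∀ a b : ZMod 2, a ≠ b → b = a + 1 := by decide

open scoped Fin.NatCast Fin.CommRing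

theorem stmt4 (n : ℕ) (hn : Odd n) :
    Function.Bijective (fun (x : Fin n → ZMod 2) => fun (i : Fin n) =>
      x i + x ⟨(i.val + 1) % n, Nat.mod_lt _ i.pos⟩
        + x ⟨(i.val + 1) % n, Nat.mod_lt _ i.pos⟩
          * x ⟨(i.val + 2) % n, Nat.mod_lt _ i.pos⟩) := by
  obtain ⟨m, rfl⟩ : ∃ m, n = m + 1 := ⟨n - 1, by rcases hn with ⟨k, hk⟩; omega⟩
  set N := m + 1 with hN
  have e1 : ∀ i : Fin N, (⟨(i.val + 1) % N, Nat.mod_lt _ i.pos⟩ : Fin N) = i + 1 := by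
    intro i; ext
    show (i.val + 1) % N = ((i + 1 : Fin N)).val
    simp only [Fin.add_def, Fin.val_one', Fin.val_mk, Nat.add_mod_mod, Nat.mod_add_mod]
  have e2 : ∀ i : Fin N, (⟨(i.val + 2) % N, Nat.mod_lt _ i.pos⟩ : Fin N) = i + 1 + 1 := by
    intro i; ext
    show (i.val + 2) % N = ((i + 1 + 1 : Fin N)).val
    simp only [Fin.add_def, Fin.val_one', Fin.val_mk, Nat.add_mod_mod, Nat.mod_add_mod]
  have hfun : (fun (x : Fin N → ZMod 2) => fun (i : Fin N) =>
      x i + x ⟨(i.val + 1) % N, Nat.mod_lt _ i.pos⟩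
        + x ⟨(i.val + 1) % N, Nat.mod_lt _ i.pos⟩
          * x ⟨(i.val + 2) % N, Nat.mod_lt _ i.pos⟩)
      = fun (x : Fin N → ZMod 2) => fun (i : Fin N) =>
          x i + x (i+1) + x (i+1) * x (i+1+1) := by
    funext x i; rw [e1, e2]
  rw [hfun, ← Finite.injective_iff_bijective]
  intro x y hxy
  by_contra hne
  have H : ∀ i : Fin N, x i + x (i+1) + x (i+1) * x (i+1+1)
      = y i + y (i+1) + y (i+1) * y (i+1+1) := fun i => congrFun hxy i
  have castsucc : ∀ k : ℕ, ((k+1 : ℕ) : Fin N) = (k : Fin N) + 1 := by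
    intro k; rw [Nat.cast_add, Nat.cast_one]
  -- Claim 1: no two consecutive agreements
  have claim1 : ∀ i : Fin N, x i ≠ y i ∨ x (i+1) ≠ y (i+1) := by
    intro j
    by_contra hc
    push_neg at hc
    obtain ⟨h0, h1⟩ := hc
    apply hne
    have prop : ∀ k : ℕ, x (j - (k : Fin N)) = y (j - (k : Fin N)) ∧
        x (j - (k : Fin N) + 1) = y (j - (k : Fin N) + 1) := by
      intro k
      induction k with
      | zero => simpa using ⟨h0, h1⟩
      | succ k ih =>
        have hidx1 : j - ((k+1 : ℕ) : Fin N) + 1 = j - (k : Fin N) := by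
          rw [castsucc]; ring
        have hidx2 : j - ((k+1 : ℕ) : Fin N) + 1 + 1 = j - (k : Fin N) + 1 := by
          rw [castsucc]; ring
        refine ⟨?_, by rw [hidx1]; exact ih.1⟩
        have h := H (j - ((k+1 : ℕ) : Fin N))
        rw [hidx1, ih.1, ih.2] at h
        exact microA _ _ _ _ h
    funext t
    obtain ⟨k, hk⟩ : ∃ k : ℕ, j - (k : Fin N) = t :=
      ⟨(j - t).val, by simp [Fin.cast_val_eq_self]⟩
    have := (prop k).1
    rwa [hk] at this
  by_cases hall : ∀ i, x i ≠ y i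
  · -- d ≡ 1 : x alternates, impossible for odd N
    have step : ∀ i : Fin N, x (i+1) ≠ x (i+1+1) := fun i =>
      microC _ _ _ _ _ _ (H i) (hall i) (hall (i+1)) (hall (i+1+1))
    have step' : ∀ i : Fin N, x (i+1) = x i + 1 := by
      intro i
      have h := step (i - 1)
      have h1 : i - 1 + 1 = i := by ring
      have h2 : i - 1 + 1 + 1 = i + 1 := by ring
      rw [h2, h1] at h
      exact microD _ _ h
    have alt : ∀ k : ℕ, x ((k : Fin N)) = x 0 + (k : ZMod 2) := by
      intro k
      induction k with
      | zero => simp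
      | succ k ih =>
        rw [castsucc, step', ih]
        push_cast
        ring
    have hNzero : ((N : ℕ) : Fin N) = 0 := Fin.natCast_self _
    have hNone : ((N : ℕ) : ZMod 2) = 1 := by
      rw [← ZMod.natCast_mod, Nat.odd_iff.mp hn]; rfl
    have := alt N
    rw [hNzero, hNone] at this
    exact (by decide : ∀ a : ZMod 2, a ≠ a + 1) (x 0) this
  · push_neg at hall
    obtain ⟨j, hj⟩ := hall
    -- step back by two
    have step2 : ∀ i : Fin N, x (i+1+1) = y (i+1+1) → x i = y i := by
      intro i h2
      have hd1 : x (i+1) ≠ y (i+1) := by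
        rcases claim1 (i+1) with h | h
        · exact h
        · exact absurd h2 h
      have hd3 : x (i+1+1+1) ≠ y (i+1+1+1) := by
        rcases claim1 (i+1+1) with h | h
        · exact absurd h2 h
        · exact h
      exact microB _ _ _ _ _ _ _ _ ⟨H i, H (i+1), hd1, h2, hd3⟩
    have prop2 : ∀ k : ℕ, x (j - ((2*k : ℕ) : Fin N)) = y (j - ((2*k : ℕ) : Fin N)) := by
      intro k
      induction k with
      | zero => simpa using hj
      | succ k ih =>
        have hc : ((2*(k+1) : ℕ) : Fin N) = ((2*k : ℕ) : Fin N) + 1 + 1 := by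
          rw [show 2*(k+1) = 2*k+1+1 by ring, Nat.cast_add, Nat.cast_add, Nat.cast_one]
        have hidx : j - ((2*(k+1) : ℕ) : Fin N) + 1 + 1 = j - ((2*k : ℕ) : Fin N) := by
          rw [hc]; ring
        apply step2
        rw [hidx]
        exact ih
    -- choose k with 2k ≡ 1 (mod N)
    have hk2 : 2 * ((N+1)/2) = N + 1 := by
      have := Nat.odd_iff.mp hn
      omega
    have hcast : ((2 * ((N+1)/2) : ℕ) : Fin N) = 1 := by
      rw [hk2]
      rw [Nat.cast_add, Nat.cast_one, Fin.natCast_self]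
      ring
    have := prop2 ((N+1)/2)
    rw [hcast] at this
    have hc1 : x (j - 1) ≠ y (j - 1) := by
      rcases claim1 (j - 1) with h | h
      · exact h
      · rw [show j - 1 + 1 = j by ring] at h
        exact absurd hj h
    exact hc1 this
end

section
/- For d ∈ {3, 4, 5}: if g : F₂^{d-2} → F₂ is a local rule such that the periodic-boundary CA T : F₂^{d-1} → F₂^{d-1} with rule g on d-1 cells is a bijection, then g is an affine function, i.e., g(y) = c ⊕ ⊕_{i} a_i y_i for some constants c, a_i ∈ F₂. -/
set_option maxRecDepth 100000

/-- Periodic-boundary CA with rule `g` of diameter `m` on `n` cells. -/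
def pbca (n m : ℕ) (hn : 0 < n) (g : (Fin m → ZMod 2) → ZMod 2)
    (x : Fin n → ZMod 2) : Fin n → ZMod 2 :=
  fun i => g fun k => x ⟨(i.val + k.val) % n, Nat.mod_lt _ hn⟩

def dec1 (j : Fin 2) : Fin 1 → ZMod 2 := fun i => ((j.val >>> i.val) % 2 : ℕ)
def dec2 (j : Fin 4) : Fin 2 → ZMod 2 := fun i => ((j.val >>> i.val) % 2 : ℕ)
def dec3 (j : Fin 8) : Fin 3 → ZMod 2 := fun i => ((j.val >>> i.val) % 2 : ℕ)

def enc1 (y : Fin 1 → ZMod 2) : Fin 2 :=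
  ⟨(y 0).val, ZMod.val_lt _⟩
def enc2 (y : Fin 2 → ZMod 2) : Fin 4 :=
  ⟨(y 0).val + 2*(y 1).val, by have := ZMod.val_lt (y 0); have := ZMod.val_lt (y 1); omega⟩
def enc3 (y : Fin 3 → ZMod 2) : Fin 8 :=
  ⟨(y 0).val + 2*(y 1).val + 4*(y 2).val, by
    have := ZMod.val_lt (y 0); have := ZMod.val_lt (y 1); have := ZMod.val_lt (y 2); omega⟩

lemma decenc1 : ∀ y, dec1 (enc1 y) = y := by decide
lemma decenc2 : ∀ y, dec2 (enc2 y) = y := by decide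
lemma decenc3 : ∀ y, dec3 (enc3 y) = y := by decide

lemma key1 : ∀ t : Fin 2 → ZMod 2,
    Function.Bijective (fun (x : Fin 2 → ZMod 2) (i : Fin 2) =>
      t (enc1 (fun k => x ⟨(i.val + k.val) % 2, by omega⟩))) →
    ∃ c : ZMod 2, ∃ a : Fin 1 → ZMod 2, ∀ j, t j = c + ∑ i, a i * dec1 j i := by decide

lemma key2 : ∀ t : Fin 4 → ZMod 2,
    Function.Bijective (fun (x : Fin 3 → ZMod 2) (i : Fin 3) =>
      t (enc2 (fun k => x ⟨(i.val + k.val) % 3, by omega⟩))) →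
    ∃ c : ZMod 2, ∃ a : Fin 2 → ZMod 2, ∀ j, t j = c + ∑ i, a i * dec2 j i := by decide

lemma key3 : ∀ t : Fin 8 → ZMod 2,
    Function.Bijective (fun (x : Fin 4 → ZMod 2) (i : Fin 4) =>
      t (enc3 (fun k => x ⟨(i.val + k.val) % 4, by omega⟩))) →
    ∃ c : ZMod 2, ∃ a : Fin 3 → ZMod 2, ∀ j, t j = c + ∑ i, a i * dec3 j i := by decide

theorem stmt8 (d : ℕ) (hd : d = 3 ∨ d = 4 ∨ d = 5)
    (g : (Fin (d-2) → ZMod 2) → ZMod 2)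
    (hbij : Function.Bijective
      (pbca (d-1) (d-2) (by rcases hd with h | h | h <;> omega) g)) :
    ∃ (c : ZMod 2) (a : Fin (d-2) → ZMod 2),
      ∀ y : Fin (d-2) → ZMod 2, g y = c + ∑ i, a i * y i := by
  rcases hd with h | h | h <;> subst h
  · obtain ⟨c, a, ht⟩ := key1 (fun j => g (dec1 j)) (by
      convert hbij using 2 with x
      funext i
      exact congrArg g (decenc1 _))
    exact ⟨c, a, fun y => by
      have := ht (enc1 y); rwa [decenc1 y] at this⟩
  · obtain ⟨c, a, ht⟩ := key2 (fun j => g (dec2 j)) (by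
      convert hbij using 2 with x
      funext i
      exact congrArg g (decenc2 _))
    exact ⟨c, a, fun y => by
      have := ht (enc2 y); rwa [decenc2 y] at this⟩
  · obtain ⟨c, a, ht⟩ := key3 (fun j => g (dec3 j)) (by
      convert hbij using 2 with x
      funext i
      exact congrArg g (decenc3 _))
    exact ⟨c, a, fun y => by
      have := ht (enc3 y); rwa [decenc3 y] at this⟩
end
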